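/- arXiv:2403.17259 — 2 statements merged into one kernel-verified Lean document; each statement's English description precedes it below -/
import Mathlib

section
/- Assume Ψ ≥ 0. Then, setting λ = ᾱ·β₁/β_{t+1}, we have 0 < λ < 1 and the negative density evaluated at the diffused point is sub-linearly correlated with the positive density evaluated at x₀: f_n(x_t) ≤ C · (f_p(x₀))^λ, where C = (2π β_{t+1})^{−k/2} · (2π β₁)^{k λ / 2}. -/
open Real
open scoped InnerProductSpace

/-- Sub-linear positivity: assuming `Ψ ≥ 0` and setting `λ = ᾱ·β₁/β_{t+1}`, we have
`0 < λ < 1` and `f_n(x_t) ≤ C · (f_p(x₀))^λ` with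
`C = (2π β_{t+1})^(−k/2) · (2π β₁)^(k λ/2)`. -/
theorem sublinear_positivity_diffusion
    (k : ℕ) (hk : 1 ≤ k)
    (β₁ βt1 : ℝ) (hβ₁ : 0 < β₁) (hβ : β₁ < βt1)
    (α : ℝ) (hα0 : 0 < α) (hα1 : α < 1)
    (x₀ μ₀ μt ε₀ xt Δ : EuclideanSpace ℝ (Fin k)) (Ψ : ℝ)
    (hxt : xt = Real.sqrt α • x₀ + Real.sqrt (1 - α) • ε₀)
    (hΔ : Δ = Real.sqrt α • μ₀ + Real.sqrt (1 - α) • ε₀ - μt)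
    (hΨ : Ψ = 2 * ⟪Δ, Real.sqrt α • (x₀ - μ₀)⟫_ℝ + ‖Δ‖ ^ 2)
    (fp fn : EuclideanSpace ℝ (Fin k) → ℝ)
    (hfp : ∀ x, fp x = (2 * π * β₁) ^ (-(k : ℝ) / 2) *
      Real.exp (-‖x - μ₀‖ ^ 2 / (2 * β₁)))
    (hfn : ∀ x, fn x = (2 * π * βt1) ^ (-(k : ℝ) / 2) *
      Real.exp (-‖x - μt‖ ^ 2 / (2 * βt1)))
    (hΨ0 : 0 ≤ Ψ)
    (lam : ℝ) (hlam : lam = α * β₁ / βt1) :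
    0 < lam ∧ lam < 1 ∧
      fn xt ≤ (2 * π * βt1) ^ (-(k : ℝ) / 2) * (2 * π * β₁) ^ ((k : ℝ) * lam / 2) *
        (fp x₀) ^ lam := by
  have hβt1 : 0 < βt1 := hβ₁.trans hβ
  have hlam0 : 0 < lam := by rw [hlam]; positivity
  have hlam1 : lam < 1 := by
    rw [hlam, div_lt_one hβt1]; nlinarith
  refine ⟨hlam0, hlam1, ?_⟩
  have hxtμ : xt - μt = Real.sqrt α • (x₀ - μ₀) + Δ := by
    rw [hxt, hΔ]; module
  have hsm : ‖Real.sqrt α • (x₀ - μ₀)‖ ^ 2 = α * ‖x₀ - μ₀‖ ^ 2 := by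
    rw [norm_smul, mul_pow, Real.norm_eq_abs, sq_abs, Real.sq_sqrt hα0.le]
  have hnorm : ‖xt - μt‖ ^ 2 = α * ‖x₀ - μ₀‖ ^ 2 + Ψ := by
    rw [hxtμ, hΨ, norm_add_sq_real, hsm, real_inner_comm]
    ring
  rw [hfn xt, hfp x₀, hnorm]
  set N := ‖x₀ - μ₀‖ ^ 2 with hN
  have hN0 : 0 ≤ N := by positivity
  have hA : (0:ℝ) < 2 * π * β₁ := by positivity
  have hrw : ((2 * π * β₁) ^ (-(k : ℝ) / 2) * Real.exp (-N / (2 * β₁))) ^ lam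
      = (2 * π * β₁) ^ (-(k : ℝ) / 2 * lam) * Real.exp (-N / (2 * β₁) * lam) := by
    rw [Real.mul_rpow (by positivity) (Real.exp_pos _).le, ← Real.rpow_mul hA.le,
      ← Real.exp_mul]
  rw [hrw]
  have hcomb : (2 * π * β₁) ^ ((k : ℝ) * lam / 2) * (2 * π * β₁) ^ (-(k : ℝ) / 2 * lam)
      = 1 := by
    rw [← Real.rpow_add hA]
    norm_num
    rw [show (k : ℝ) * lam / 2 + -(k : ℝ) / 2 * lam = 0 by ring, Real.rpow_zero]
  have hexpo : -N / (2 * β₁) * lam = -(α * N) / (2 * βt1) := by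
    rw [hlam]; field_simp
  calc (2 * π * βt1) ^ (-(k : ℝ) / 2) * Real.exp (-(α * N + Ψ) / (2 * βt1))
      ≤ (2 * π * βt1) ^ (-(k : ℝ) / 2) * Real.exp (-(α * N) / (2 * βt1)) := by
        have hexple : Real.exp (-(α * N + Ψ) / (2 * βt1)) ≤
            Real.exp (-(α * N) / (2 * βt1)) := by
          apply Real.exp_le_exp.2
          gcongr
          linarith
        exact mul_le_mul_of_nonneg_left hexple (by positivity)
    _ = (2 * π * βt1) ^ (-(k : ℝ) / 2) *
        ((2 * π * β₁) ^ ((k : ℝ) * lam / 2) * (2 * π * β₁) ^ (-(k : ℝ) / 2 * lam) *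
          Real.exp (-N / (2 * β₁) * lam)) := by
        rw [hcomb, hexpo]; ring
    _ = _ := by ring
end

section
/- Closed form of the multi-step forward diffusion process: for every t ≥ 0, the marginal measure of the forward chain started at x₀ satisfies ν_t = N(√(ᾱ_t) · x₀, 1 − ᾱ_t), where ᾱ_t = ∏_{i=1}^{t} (1 − β_i). -/
open MeasureTheory ProbabilityTheory
open scoped NNReal

/-! Induction on `t`: a Gaussian stays Gaussian under scaling and under convolution with a
Gaussian (means and variances add), and `(1 - β) (1 - ᾱ) + β = 1 - ᾱ (1 - β)` keeps the
variance of the form `1 - ᾱ`. -/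

lemma gaussianReal_map_sqrt_mul_conv {a b : ℝ≥0} (ha : a ≤ 1) (hb : b ≤ 1) (m : ℝ) :
    (gaussianReal (Real.sqrt a * m) (1 - a)).map (fun x => Real.sqrt (1 - (b : ℝ)) * x)
        ∗ gaussianReal 0 b
      = gaussianReal (Real.sqrt ((a * (1 - b) : ℝ≥0) : ℝ) * m) (1 - a * (1 - b)) := by
  have hb' : (b : ℝ) ≤ 1 := by exact_mod_cast hb
  have hab : a * (1 - b) ≤ 1 := mul_le_one' ha tsub_le_self
  rw [gaussianReal_map_const_mul, gaussianReal_conv_gaussianReal, add_zero]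
  congr 1
  · rw [NNReal.coe_mul, NNReal.coe_sub hb, NNReal.coe_one, Real.sqrt_mul a.coe_nonneg]
    ring
  · apply NNReal.coe_injective
    simp only [NNReal.coe_add, NNReal.coe_mul, NNReal.coe_mk, NNReal.coe_sub ha,
      NNReal.coe_sub hab, NNReal.coe_sub hb, NNReal.coe_one, Real.sq_sqrt (sub_nonneg.2 hb')]
    ring

/-- Closed form of the multi-step forward diffusion process: for every `t ≥ 0`, the
marginal measure of the forward chain started at `x₀` satisfies
`ν_t = N(√(ᾱ_t) · x₀, 1 − ᾱ_t)` where `ᾱ_t = ∏_{i=1}^{t} (1 − β_i)`. -/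
theorem forward_diffusion_closed_form
    (x₀ : ℝ) (β : ℕ → ℝ≥0) (hβ : ∀ i, β i ≤ 1)
    (ν : ℕ → Measure ℝ)
    (hν0 : ν 0 = Measure.dirac x₀)
    (hν : ∀ t : ℕ, 1 ≤ t →
      ν t = Measure.conv
        (Measure.map (fun x : ℝ => Real.sqrt (1 - (β t : ℝ)) * x) (ν (t - 1)))
        (gaussianReal 0 (β t))) :
    ∀ t : ℕ,
      ν t = gaussianReal
        (Real.sqrt ((∏ i ∈ Finset.Icc 1 t, (1 - β i) : ℝ≥0) : ℝ) * x₀)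
        (1 - ∏ i ∈ Finset.Icc 1 t, (1 - β i)) := by
  intro t
  induction t with
  | zero => simp [hν0, gaussianReal_zero_var]
  | succ t ih =>
    have hᾱ : ∏ i ∈ Finset.Icc 1 t, (1 - β i) ≤ 1 :=
      Finset.prod_le_one' fun _ _ => tsub_le_self
    rw [hν (t + 1) t.succ_pos, Nat.add_sub_cancel, ih, gaussianReal_map_sqrt_mul_conv hᾱ (hβ _),
      Finset.prod_Icc_succ_top (Nat.le_add_left 1 t)]
end
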